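/- For all skew-symmetric X_1, X_2, X_3, X_4 ∈ Alt_5 and all indices i, j, k, l, m ∈ {1,2,3,4}, the following identities hold among the functions [ijklm]: (i) [ijklm] = [jiklm] and [ijklm] = [ijkml]; (ii) [ijklm] = −[lmkij]; (iii) [ijklm] + [jkilm] + [kijlm] = 0; (iv) [iiklm] = −2[kiilm]; (v) [iikli] = −[iilki] = [iklii] = −[ilkii]; (vi) [iiilm] = 0 and [ijkij] = 0. -/
import Mathlib

open Matrix

noncomputable section

/-- Pfaffian of a 4×4 (skew-symmetric) complex matrix. -/
def pf4 (W : Matrix (Fin 4) (Fin 4) ℂ) : ℂ :=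
  W 0 1 * W 2 3 - W 0 2 * W 1 3 + W 0 3 * W 1 2

/-- The 4×4 matrix obtained from a 5×5 matrix by deleting the `i`-th row and column. -/
def delRC (X : Matrix (Fin 5) (Fin 5) ℂ) (i : Fin 5) : Matrix (Fin 4) (Fin 4) ℂ :=
  X.submatrix i.succAbove i.succAbove

/-- The `SL₅`-equivariant bilinear map `β : Alt₅ × Alt₅ → ℂ⁵`. -/
def betaMap (X Y : Matrix (Fin 5) (Fin 5) ℂ) : Fin 5 → ℂ := fun i =>
  (-1 : ℂ) ^ (i : ℕ) * (pf4 (delRC (X + Y) i) - pf4 (delRC X i) - pf4 (delRC Y i))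

/-- The invariant `[ijklm](X₁,X₂,X₃,X₄) = ᵗβ(Xᵢ,Xⱼ) Xₖ β(Xₗ,Xₘ)`. -/
def bracket (i j k l m : Fin 4) (X : Fin 4 → Matrix (Fin 5) (Fin 5) ℂ) : ℂ :=
  ∑ a : Fin 5, ∑ b : Fin 5, betaMap (X i) (X j) a * (X k) a b * betaMap (X l) (X m) b

lemma pf4_d0 (X : Matrix (Fin 5) (Fin 5) ℂ) :
    pf4 (delRC X 0) = X 1 2 * X 3 4 - X 1 3 * X 2 4 + X 1 4 * X 2 3 := rfl
lemma pf4_d1 (X : Matrix (Fin 5) (Fin 5) ℂ) :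
    pf4 (delRC X 1) = X 0 2 * X 3 4 - X 0 3 * X 2 4 + X 0 4 * X 2 3 := rfl
lemma pf4_d2 (X : Matrix (Fin 5) (Fin 5) ℂ) :
    pf4 (delRC X 2) = X 0 1 * X 3 4 - X 0 3 * X 1 4 + X 0 4 * X 1 3 := rfl
lemma pf4_d3 (X : Matrix (Fin 5) (Fin 5) ℂ) :
    pf4 (delRC X 3) = X 0 1 * X 2 4 - X 0 2 * X 1 4 + X 0 4 * X 1 2 := rfl
lemma pf4_d4 (X : Matrix (Fin 5) (Fin 5) ℂ) :
    pf4 (delRC X 4) = X 0 1 * X 2 3 - X 0 2 * X 1 3 + X 0 3 * X 1 2 := rfl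

lemma skew_apply (M : Matrix (Fin 5) (Fin 5) ℂ) (h : Mᵀ = -M) (a b : Fin 5) :
    M b a = -M a b := by
  calc M b a = Mᵀ a b := rfl
    _ = (-M) a b := by rw [h]
    _ = -M a b := rfl

lemma skew_diag (M : Matrix (Fin 5) (Fin 5) ℂ) (h : Mᵀ = -M) (a : Fin 5) :
    M a a = 0 := by
  have := skew_apply M h a a
  linear_combination this / 2

lemma betaMap_comm (X Y : Matrix (Fin 5) (Fin 5) ℂ) : betaMap X Y = betaMap Y X := by
  funext t
  unfold betaMap
  rw [add_comm X Y]
  ring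

set_option maxHeartbeats 2000000 in
lemma cyclic (X Y Z : Matrix (Fin 5) (Fin 5) ℂ) (hx : Xᵀ = -X) (hy : Yᵀ = -Y)
    (hz : Zᵀ = -Z) (b : Fin 5) :
    ∑ a : Fin 5, (betaMap X Y a * Z a b + betaMap Y Z a * X a b
      + betaMap Z X a * Y a b) = 0 := by
  have sX := skew_apply X hx
  have sY := skew_apply Y hy
  have sZ := skew_apply Z hz
  have dX := skew_diag X hx
  have dY := skew_diag Y hy
  have dZ := skew_diag Z hz
  have m0 : ∀ (h : 0 < 5), (⟨0, h⟩ : Fin 5) = 0 := fun _ => rfl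
  have m1 : ∀ (h : 1 < 5), (⟨1, h⟩ : Fin 5) = 1 := fun _ => rfl
  have m2 : ∀ (h : 2 < 5), (⟨2, h⟩ : Fin 5) = 2 := fun _ => rfl
  have m3 : ∀ (h : 3 < 5), (⟨3, h⟩ : Fin 5) = 3 := fun _ => rfl
  have m4 : ∀ (h : 4 < 5), (⟨4, h⟩ : Fin 5) = 4 := fun _ => rfl
  have c0 : ((0 : Fin 5) : ℕ) = 0 := rfl
  have c1 : ((1 : Fin 5) : ℕ) = 1 := rfl
  have c2 : ((2 : Fin 5) : ℕ) = 2 := rfl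
  have c3 : ((3 : Fin 5) : ℕ) = 3 := rfl
  have c4 : ((4 : Fin 5) : ℕ) = 4 := rfl
  fin_cases b <;>
    simp only [Fin.sum_univ_five, betaMap, pf4_d0, pf4_d1, pf4_d2, pf4_d3, pf4_d4,
      Matrix.add_apply, m0, m1, m2, m3, m4, c0, c1, c2, c3, c4, Fin.isValue,
      sX 0 1, sX 0 2, sX 0 3, sX 0 4, sX 1 2, sX 1 3, sX 1 4, sX 2 3, sX 2 4, sX 3 4,
      sY 0 1, sY 0 2, sY 0 3, sY 0 4, sY 1 2, sY 1 3, sY 1 4, sY 2 3, sY 2 4, sY 3 4,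
      sZ 0 1, sZ 0 2, sZ 0 3, sZ 0 4, sZ 1 2, sZ 1 3, sZ 1 4, sZ 2 3, sZ 2 4, sZ 3 4,
      dX, dY, dZ] <;>
    ring

lemma pair_antisym (M : Matrix (Fin 5) (Fin 5) ℂ) (h : Mᵀ = -M) (u v : Fin 5 → ℂ) :
    ∑ a : Fin 5, ∑ b : Fin 5, u a * M a b * v b
      = -∑ a : Fin 5, ∑ b : Fin 5, v a * M a b * u b := by
  have s := skew_apply M h
  rw [Finset.sum_comm, ← Finset.sum_neg_distrib]
  refine Finset.sum_congr rfl fun x _ => ?_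
  rw [← Finset.sum_neg_distrib]
  refine Finset.sum_congr rfl fun y _ => ?_
  rw [s y x]
  ring

section
variable (X : Fin 4 → Matrix (Fin 5) (Fin 5) ℂ)
variable (hX : ∀ t, (X t)ᵀ = -X t)

lemma br_sym12 (i j k l m : Fin 4) : bracket i j k l m X = bracket j i k l m X := by
  simp only [bracket, betaMap_comm (X i) (X j)]

lemma br_sym45 (i j k l m : Fin 4) : bracket i j k l m X = bracket i j k m l X := by
  simp only [bracket, betaMap_comm (X l) (X m)]

include hX in
lemma br_swap (i j k l m : Fin 4) : bracket i j k l m X = -bracket l m k i j X := by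
  simp only [bracket]
  exact pair_antisym (X k) (hX k) _ _

include hX in
lemma br_cyc (i j k l m : Fin 4) :
    bracket i j k l m X + bracket j k i l m X + bracket k i j l m X = 0 := by
  have key := cyclic (X i) (X j) (X k) (hX i) (hX j) (hX k)
  have swap : ∀ p q r : Fin 4, bracket p q r l m X
      = ∑ b : Fin 5, ∑ a : Fin 5,
        betaMap (X p) (X q) a * (X r) a b * betaMap (X l) (X m) b := by
    intro p q r
    simp only [bracket]
    exact Finset.sum_comm
  rw [swap i j k, swap j k i, swap k i j, ← Finset.sum_add_distrib,
    ← Finset.sum_add_distrib]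
  refine Finset.sum_eq_zero fun b _ => ?_
  rw [← Finset.sum_add_distrib, ← Finset.sum_add_distrib]
  calc ∑ a : Fin 5, (betaMap (X i) (X j) a * (X k) a b * betaMap (X l) (X m) b
        + betaMap (X j) (X k) a * (X i) a b * betaMap (X l) (X m) b
        + betaMap (X k) (X i) a * (X j) a b * betaMap (X l) (X m) b)
      = (∑ a : Fin 5, (betaMap (X i) (X j) a * (X k) a b
        + betaMap (X j) (X k) a * (X i) a b
        + betaMap (X k) (X i) a * (X j) a b)) * betaMap (X l) (X m) b := by
        rw [Finset.sum_mul]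
        exact Finset.sum_congr rfl fun a _ => by ring
    _ = 0 := by rw [key b, zero_mul]

include hX in
lemma br_rcyc (i j k l m : Fin 4) :
    bracket i j k l m X + bracket i j l m k X + bracket i j m k l X = 0 := by
  linear_combination br_swap X hX i j k l m + br_swap X hX i j l m k
    + br_swap X hX i j m k l - br_cyc X hX l m k i j

end

theorem bracket_relations (X : Fin 4 → Matrix (Fin 5) (Fin 5) ℂ)
    (hX : ∀ t, (X t)ᵀ = -X t) (i j k l m : Fin 4) :
    (bracket i j k l m X = bracket j i k l m X ∧
      bracket i j k l m X = bracket i j k m l X) ∧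
    (bracket i j k l m X = -bracket l m k i j X) ∧
    (bracket i j k l m X + bracket j k i l m X + bracket k i j l m X = 0) ∧
    (bracket i i k l m X = -2 * bracket k i i l m X) ∧
    (bracket i i k l i X = -bracket i i l k i X ∧
      bracket i i k l i X = bracket i k l i i X ∧
      bracket i i k l i X = -bracket i l k i i X) ∧
    (bracket i i i l m X = 0 ∧ bracket i j k i j X = 0) := by
  have h6a : ∀ l m, bracket i i i l m X = 0 := fun l m => by
    linear_combination (br_cyc X hX i i i l m) / 3
  refine ⟨⟨br_sym12 X i j k l m, br_sym45 X i j k l m⟩, br_swap X hX i j k l m,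
    br_cyc X hX i j k l m, ?_, ⟨?_, ?_, ?_⟩, h6a l m, ?_⟩
  · linear_combination br_cyc X hX i i k l m - br_sym12 X i k i l m
  · linear_combination br_rcyc X hX i i k l i - h6a k l - br_sym45 X i i l i k
  · linear_combination br_rcyc X hX i i k l i - h6a k l - br_swap X hX i k l i i
  · linear_combination br_swap X hX i l k i i - br_sym45 X i i k i l
  · linear_combination (br_swap X hX i j k i j) / 2
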